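/- Let M = (A,B,C,D) be a discrete-time system and X ∈ ℂ^{n×n} Hermitian with X > 0. Then every Δ ∈ ℂ^{(n+m)×(n+m)} for which Ŵ(X,M) + E₁ΔE₂ᴴ + E₂ΔᴴE₁ᴴ is singular satisfies ‖Δ‖₂ ≥ λ_min(D_s·Ŵ(X,M)·D_s); equivalently, the X-passivity radius satisfies λ_min(D_s·Ŵ(X,M)·D_s) ≤ ρ_M(X). -/

import Mathlib

/-! If `Ŵ + E₁ΔE₂ᴴ + E₂ΔᴴE₁ᴴ` annihilates `z ≠ 0`, then with `u = E₁ᴴz` and `v = E₂ᴴz`,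
`zᴴŴz = -2 Re ⟪u, Δv⟫ ≤ 2‖Δ‖‖u‖‖v‖ ≤ ‖Δ‖(‖u‖² + ‖v‖²)`. Since `D_s (E₁E₁ᴴ + E₂E₂ᴴ) D_s = I`, the
vector `w = D_s⁻¹z` satisfies `‖w‖² = ‖u‖² + ‖v‖²` and `zᴴŴz = wᴴ(D_sŴD_s)w ≥ λ_min ‖w‖²`, whence
`λ_min ≤ ‖Δ‖`. For the radius it remains to see that some `Δ` is admissible: `Δ = [[I - A, -B], [-C, -D]]`
replaces `M` by `(I, 0, 0, 0)`, and `Ŵ(X, (I, 0, 0, 0))` has zero Schur complement. -/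

open Matrix
open scoped ComplexOrder

/-- The smallest eigenvalue of a Hermitian matrix, expressed as the infimum of the
Rayleigh quotient over unit vectors. -/
noncomputable def lamMin {k : Type*} [Fintype k] [DecidableEq k]
    (A : Matrix k k ℂ) : ℝ :=
  ⨅ x : {x : EuclideanSpace ℂ k // ‖x‖ = 1},
    (inner ℂ ((x : EuclideanSpace ℂ k)) (Matrix.toEuclideanLin A x) : ℂ).re

/-- The spectral norm (largest singular value) of a complex matrix. -/
noncomputable def spNorm {k l : Type*} [Fintype k] [Fintype l] [DecidableEq k] [DecidableEq l]
    (A : Matrix k l ℂ) : ℝ :=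
  ‖(Matrix.toEuclideanLin A).toContinuousLinearMap‖

/-- `E₁ = [[I,0],[0,0],[0,I]]`. -/
noncomputable def Emat1 (n m : ℕ) : Matrix (Fin n ⊕ (Fin n ⊕ Fin m)) (Fin n ⊕ Fin m) ℂ :=
  fromBlocks 1 0 (fromRows 0 0) (fromRows 0 1)

/-- `E₂ = [[0,0],[I,0],[0,I]]`. -/
noncomputable def Emat2 (n m : ℕ) : Matrix (Fin n ⊕ (Fin n ⊕ Fin m)) (Fin n ⊕ Fin m) ℂ :=
  fromBlocks 0 0 (fromRows 1 0) (fromRows 0 1)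

/-- `D_s = diag(Iₙ, Iₙ, (1/√2)·I_m)`. -/
noncomputable def Dscale (n m : ℕ) :
    Matrix (Fin n ⊕ (Fin n ⊕ Fin m)) (Fin n ⊕ (Fin n ⊕ Fin m)) ℂ :=
  fromBlocks 1 0 0 (fromBlocks 1 0 0 ((((Real.sqrt 2)⁻¹ : ℝ) : ℂ) • 1))

/-- The matrix `Ŵ(X,M) = [[X⁻¹, A, B],[Aᴴ, X, Cᴴ],[Bᴴ, C, Dᴴ + D]]`. -/
noncomputable def What {n m : ℕ} (X A : Matrix (Fin n) (Fin n) ℂ)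
    (B : Matrix (Fin n) (Fin m) ℂ) (C : Matrix (Fin m) (Fin n) ℂ)
    (D : Matrix (Fin m) (Fin m) ℂ) :
    Matrix (Fin n ⊕ (Fin n ⊕ Fin m)) (Fin n ⊕ (Fin n ⊕ Fin m)) ℂ :=
  fromBlocks X⁻¹ (fromCols A B) (fromRows Aᴴ Bᴴ) (fromBlocks X Cᴴ C (Dᴴ + D))

/-- The `X`-passivity radius. -/
noncomputable def XPassivityRadius {n m : ℕ} (X A : Matrix (Fin n) (Fin n) ℂ)
    (B : Matrix (Fin n) (Fin m) ℂ) (C : Matrix (Fin m) (Fin n) ℂ)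
    (D : Matrix (Fin m) (Fin m) ℂ) : ℝ :=
  sInf {r : ℝ | ∃ Δ : Matrix (Fin n ⊕ Fin m) (Fin n ⊕ Fin m) ℂ,
    (What X A B C D + Emat1 n m * Δ * (Emat2 n m)ᴴ
      + Emat2 n m * Δᴴ * (Emat1 n m)ᴴ).det = 0 ∧ r = spNorm Δ}


open scoped InnerProductSpace

section Rayleigh

variable {k l : Type*} [Fintype k] [Fintype l] [DecidableEq k] [DecidableEq l]

lemma norm_inner_toEuclideanLin_le (Δ : Matrix k l ℂ) (x : EuclideanSpace ℂ k)
    (y : EuclideanSpace ℂ l) : ‖⟪x, toEuclideanLin Δ y⟫_ℂ‖ ≤ spNorm Δ * (‖x‖ * ‖y‖) :=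
  calc ‖⟪x, toEuclideanLin Δ y⟫_ℂ‖ ≤ ‖x‖ * ‖toEuclideanLin Δ y‖ := norm_inner_le_norm _ _
    _ ≤ ‖x‖ * (spNorm Δ * ‖y‖) := by
        gcongr; exact (toEuclideanLin Δ).toContinuousLinearMap.le_opNorm y
    _ = spNorm Δ * (‖x‖ * ‖y‖) := by ring

lemma bddBelow_rayleigh (A : Matrix k k ℂ) :
    BddBelow (Set.range fun x : {x : EuclideanSpace ℂ k // ‖x‖ = 1} =>
      (⟪(x : EuclideanSpace ℂ k), toEuclideanLin A x⟫_ℂ).re) := by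
  refine ⟨-spNorm A, ?_⟩
  rintro r ⟨⟨x, hx⟩, rfl⟩
  have h := norm_inner_toEuclideanLin_le A x x
  rw [hx, one_mul, mul_one] at h
  linarith [neg_abs_le (⟪x, toEuclideanLin A x⟫_ℂ).re,
    Complex.abs_re_le_norm ⟪x, toEuclideanLin A x⟫_ℂ]

lemma lamMin_mul_norm_sq_le (A : Matrix k k ℂ) (x : EuclideanSpace ℂ k) :
    lamMin A * ‖x‖ ^ 2 ≤ (⟪x, toEuclideanLin A x⟫_ℂ).re := by
  rcases eq_or_ne x 0 with rfl | hx
  · simp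
  have hpos : 0 < ‖x‖ := norm_pos_iff.mpr hx
  set c : ℝ := ‖x‖⁻¹ with hc
  have hunit : ‖(c : ℂ) • x‖ = 1 := by
    rw [norm_smul, Complex.norm_real, Real.norm_of_nonneg (by positivity), inv_mul_cancel₀ hpos.ne']
  have hscale : (⟪(c : ℂ) • x, toEuclideanLin A ((c : ℂ) • x)⟫_ℂ).re
      = c ^ 2 * (⟪x, toEuclideanLin A x⟫_ℂ).re := by
    rw [map_smul, inner_smul_left, inner_smul_right, Complex.conj_ofReal, ← mul_assoc,
      ← Complex.ofReal_mul, Complex.re_ofReal_mul, sq]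
  have hle : lamMin A ≤ c ^ 2 * (⟪x, toEuclideanLin A x⟫_ℂ).re :=
    hscale ▸ ciInf_le (bddBelow_rayleigh A) ⟨(c : ℂ) • x, hunit⟩
  calc lamMin A * ‖x‖ ^ 2 ≤ c ^ 2 * (⟪x, toEuclideanLin A x⟫_ℂ).re * ‖x‖ ^ 2 := by gcongr
    _ = (⟪x, toEuclideanLin A x⟫_ℂ).re := by
        rw [mul_right_comm, ← mul_pow, hc, inv_mul_cancel₀ hpos.ne', one_pow, one_mul]

lemma lamMin_of_isEmpty [IsEmpty k] (A : Matrix k k ℂ) : lamMin A = 0 := by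
  have : IsEmpty {x : EuclideanSpace ℂ k // ‖x‖ = 1} :=
    ⟨fun ⟨x, hx⟩ => by simp [Subsingleton.elim x 0] at hx⟩
  exact Real.iInf_of_isEmpty _

end Rayleigh

lemma toEuclideanLin_mul_apply {k l o : Type*} [Fintype l] [Fintype o] [DecidableEq l]
    [DecidableEq o] (M : Matrix k l ℂ) (N : Matrix l o ℂ) (x : EuclideanSpace ℂ o) :
    toEuclideanLin (M * N) x = toEuclideanLin M (toEuclideanLin N x) := by
  rw [toLpLin_mul_same]; rfl

section Perturbation

variable {k l : Type*} [Fintype k] [Fintype l] [DecidableEq k] [DecidableEq l]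

lemma inner_toEuclideanLin_mul {o : Type*} [Fintype o] [DecidableEq o] (M : Matrix k l ℂ)
    (N : Matrix l o ℂ) (x : EuclideanSpace ℂ k) (y : EuclideanSpace ℂ o) :
    ⟪x, toEuclideanLin (M * N) y⟫_ℂ = ⟪toEuclideanLin Mᴴ x, toEuclideanLin N y⟫_ℂ := by
  rw [toEuclideanLin_conjTranspose_eq_adjoint, LinearMap.adjoint_inner_left,
    toEuclideanLin_mul_apply]

lemma inner_toEuclideanLin_conjTranspose_mul_mul (S V : Matrix k k ℂ) (w : EuclideanSpace ℂ k) :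
    ⟪w, toEuclideanLin (Sᴴ * V * S) w⟫_ℂ
      = ⟪toEuclideanLin S w, toEuclideanLin V (toEuclideanLin S w)⟫_ℂ := by
  rw [Matrix.mul_assoc, inner_toEuclideanLin_mul, conjTranspose_conjTranspose,
    toEuclideanLin_mul_apply]

lemma re_inner_toEuclideanLin_add_perturbation (W : Matrix k k ℂ) (E₁ E₂ : Matrix k l ℂ)
    (Δ : Matrix l l ℂ) (z : EuclideanSpace ℂ k) :
    (⟪z, toEuclideanLin (W + E₁ * Δ * E₂ᴴ + E₂ * Δᴴ * E₁ᴴ) z⟫_ℂ).re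
      = (⟪z, toEuclideanLin W z⟫_ℂ).re
        + 2 * (⟪toEuclideanLin E₁ᴴ z, toEuclideanLin Δ (toEuclideanLin E₂ᴴ z)⟫_ℂ).re := by
  rw [map_add, map_add, LinearMap.add_apply, LinearMap.add_apply, inner_add_right,
    inner_add_right, Matrix.mul_assoc, inner_toEuclideanLin_mul, toEuclideanLin_mul_apply,
    Matrix.mul_assoc, inner_toEuclideanLin_mul, toEuclideanLin_mul_apply,
    toEuclideanLin_conjTranspose_eq_adjoint Δ, LinearMap.adjoint_inner_right,
    ← inner_conj_symm (toEuclideanLin Δ _)]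
  simp only [Complex.add_re, Complex.conj_re]
  ring

lemma lamMin_le_spNorm_of_det_eq_zero (W S : Matrix k k ℂ) (E₁ E₂ : Matrix k l ℂ)
    (Δ : Matrix l l ℂ) (hS : Sᴴ * (E₁ * E₁ᴴ + E₂ * E₂ᴴ) * S = 1)
    (h : (W + E₁ * Δ * E₂ᴴ + E₂ * Δᴴ * E₁ᴴ).det = 0) :
    lamMin (Sᴴ * W * S) ≤ spNorm Δ := by
  obtain ⟨z₀, hz₀, hker⟩ := exists_mulVec_eq_zero_iff.mpr h
  set z : EuclideanSpace ℂ k := WithLp.toLp 2 z₀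
  have hkerz : toEuclideanLin (W + E₁ * Δ * E₂ᴴ + E₂ * Δᴴ * E₁ᴴ) z = 0 :=
    congrArg (WithLp.toLp 2) hker
  -- `w = S⁻¹ z`: by `hS`, `Sᴴ (E₁E₁ᴴ + E₂E₂ᴴ)` is a left, hence two-sided, inverse of `S`.
  set w := toEuclideanLin (Sᴴ * (E₁ * E₁ᴴ + E₂ * E₂ᴴ)) z
  have hSw : toEuclideanLin S w = z := by
    rw [← toEuclideanLin_mul_apply, mul_eq_one_comm.mp hS, toLpLin_one, LinearMap.id_apply]
  have hz : z ≠ 0 := fun h0 => hz₀ (congrArg WithLp.ofLp h0)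
  have hw : w ≠ 0 := fun h0 => hz (by rw [← hSw, h0, map_zero])
  set u := toEuclideanLin E₁ᴴ z
  set v := toEuclideanLin E₂ᴴ z
  have hnorm : ‖w‖ ^ 2 = ‖u‖ ^ 2 + ‖v‖ ^ 2 := by
    have := inner_toEuclideanLin_conjTranspose_mul_mul S (E₁ * E₁ᴴ + E₂ * E₂ᴴ) w
    rw [hS, toLpLin_one, LinearMap.id_apply, inner_self_eq_norm_sq_to_K, hSw, map_add,
      LinearMap.add_apply, inner_add_right, inner_toEuclideanLin_mul, inner_toEuclideanLin_mul,
      inner_self_eq_norm_sq_to_K, inner_self_eq_norm_sq_to_K] at this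
    exact_mod_cast this
  have hquad : (⟪z, toEuclideanLin W z⟫_ℂ).re = -(2 * (⟪u, toEuclideanLin Δ v⟫_ℂ).re) := by
    have := re_inner_toEuclideanLin_add_perturbation W E₁ E₂ Δ z
    rw [hkerz, inner_zero_right, Complex.zero_re] at this
    linarith
  have hcross : -(2 * (⟪u, toEuclideanLin Δ v⟫_ℂ).re) ≤ spNorm Δ * ‖w‖ ^ 2 := by
    have hΔ := norm_inner_toEuclideanLin_le Δ u v
    have hre := Complex.abs_re_le_norm ⟪u, toEuclideanLin Δ v⟫_ℂ
    have hsp : 0 ≤ spNorm Δ := norm_nonneg _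
    rw [hnorm]
    nlinarith [neg_abs_le (⟪u, toEuclideanLin Δ v⟫_ℂ).re, two_mul_le_add_sq ‖u‖ ‖v‖]
  have key : lamMin (Sᴴ * W * S) * ‖w‖ ^ 2 ≤ spNorm Δ * ‖w‖ ^ 2 :=
    calc lamMin (Sᴴ * W * S) * ‖w‖ ^ 2 ≤ (⟪w, toEuclideanLin (Sᴴ * W * S) w⟫_ℂ).re :=
          lamMin_mul_norm_sq_le _ w
      _ = (⟪z, toEuclideanLin W z⟫_ℂ).re := by
          rw [inner_toEuclideanLin_conjTranspose_mul_mul, hSw]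
      _ ≤ spNorm Δ * ‖w‖ ^ 2 := hquad ▸ hcross
  exact le_of_mul_le_mul_right key (by positivity)

end Perturbation

section System

variable {n m : ℕ}

lemma Dscale_conjTranspose : (Dscale n m)ᴴ = Dscale n m := by
  simp [Dscale, fromBlocks_conjTranspose, conjTranspose_smul]

lemma Dscale_conjTranspose_mul_Emat_gram_mul_Dscale :
    (Dscale n m)ᴴ * (Emat1 n m * (Emat1 n m)ᴴ + Emat2 n m * (Emat2 n m)ᴴ) * Dscale n m = 1 := by
  rw [Dscale_conjTranspose]
  ext (i | i | i) (j | j | j) <;>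
    simp [Dscale, Emat1, Emat2, mul_apply, Fintype.sum_sum_type, one_apply, eq_comm]
  have hsqrt : ((√2 : ℝ) : ℂ) ^ 2 = 2 := by norm_cast; simp
  split_ifs
  · field_simp
    rw [hsqrt]; ring
  · simp

lemma What_add_perturbation (X A P : Matrix (Fin n) (Fin n) ℂ) (B Q : Matrix (Fin n) (Fin m) ℂ)
    (C R : Matrix (Fin m) (Fin n) ℂ) (D S : Matrix (Fin m) (Fin m) ℂ) :
    What X A B C D + Emat1 n m * fromBlocks P Q R S * (Emat2 n m)ᴴ
      + Emat2 n m * (fromBlocks P Q R S)ᴴ * (Emat1 n m)ᴴ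
      = What X (A + P) (B + Q) (C + R) (D + S) := by
  ext (i | i | i) (j | j | j) <;>
    simp [What, Emat1, Emat2, mul_apply, Fintype.sum_sum_type, one_apply]
  ring

lemma det_What_one_zero_zero_zero [Nonempty (Fin n ⊕ Fin m)]
    (X : Matrix (Fin n) (Fin n) ℂ) (hX : IsUnit X) :
    (What X 1 0 0 0 : Matrix (Fin n ⊕ (Fin n ⊕ Fin m)) _ ℂ).det = 0 := by
  have : Invertible X := hX.invertible
  have hschur : fromBlocks X 0 0 0 - fromCols (fromRows X 0) 0
      = (0 : Matrix (Fin n ⊕ Fin m) (Fin n ⊕ Fin m) ℂ) := by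
    ext (i | i) (j | j) <;> simp
  rw [What, det_fromBlocks₁₁, invOf_eq_nonsing_inv, inv_inv_of_invertible]
  simp [fromRows_mul, hschur]

end System

/-- every perturbation `Δ` making `Ŵ(X,M) + E₁ΔE₂ᴴ + E₂ΔᴴE₁ᴴ` singular
satisfies `‖Δ‖₂ ≥ λ_min(D_s·Ŵ(X,M)·D_s)`; equivalently
`λ_min(D_s·Ŵ(X,M)·D_s) ≤ ρ_M(X)`. -/
theorem stmt8 {n m : ℕ} (A : Matrix (Fin n) (Fin n) ℂ) (B : Matrix (Fin n) (Fin m) ℂ)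
    (C : Matrix (Fin m) (Fin n) ℂ) (D : Matrix (Fin m) (Fin m) ℂ)
    (X : Matrix (Fin n) (Fin n) ℂ) (hX : X.PosDef) :
    (∀ Δ : Matrix (Fin n ⊕ Fin m) (Fin n ⊕ Fin m) ℂ,
      (What X A B C D + Emat1 n m * Δ * (Emat2 n m)ᴴ
        + Emat2 n m * Δᴴ * (Emat1 n m)ᴴ).det = 0 →
      lamMin (Dscale n m * What X A B C D * Dscale n m) ≤ spNorm Δ)
    ∧ lamMin (Dscale n m * What X A B C D * Dscale n m) ≤ XPassivityRadius X A B C D := by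
  have hbound (Δ : Matrix (Fin n ⊕ Fin m) (Fin n ⊕ Fin m) ℂ)
      (h : (What X A B C D + Emat1 n m * Δ * (Emat2 n m)ᴴ
        + Emat2 n m * Δᴴ * (Emat1 n m)ᴴ).det = 0) :
      lamMin (Dscale n m * What X A B C D * Dscale n m) ≤ spNorm Δ := by
    simpa only [Dscale_conjTranspose] using lamMin_le_spNorm_of_det_eq_zero _ _ _ _ Δ
      Dscale_conjTranspose_mul_Emat_gram_mul_Dscale h
  refine ⟨hbound, ?_⟩
  rcases isEmpty_or_nonempty (Fin n ⊕ Fin m) with hK | hK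
  · have : IsEmpty (Fin n ⊕ (Fin n ⊕ Fin m)) := by simp_all [isEmpty_sum]
    rw [lamMin_of_isEmpty]
    exact Real.sInf_nonneg (by rintro _ ⟨Δ, -, rfl⟩; exact norm_nonneg _)
  · refine le_csInf ⟨_, fromBlocks (1 - A) (-B) (-C) (-D), ?_, rfl⟩ ?_
    · simpa [What_add_perturbation] using det_What_one_zero_zero_zero X hX.isUnit
    · rintro _ ⟨Δ, h, rfl⟩
      exact hbound Δ h
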